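/- arXiv:2501.12017 — 6 statements merged into one kernel-verified Lean document; each statement's English description precedes it below -/
import Mathlib

section
/- A BCK-algebra is commutative (i.e., satisfies x⊖(x⊖y) = y⊖(y⊖x)) if and only if it satisfies the identities x⊖0 = x, 0⊖x = 0, x⊖(x⊖y) = y⊖(y⊖x), and (x⊖y)⊖z = (x⊖z)⊖y; in other words, the class of commutative BCK-algebras is axiomatized by these four identities (forming a variety). -/
/-- An algebra `(A, ⊖, 0)` is a commutative BCK-algebra (BCK axioms plus
commutativity) iff it satisfies the four identities `x⊖0 = x`, `0⊖x = 0`,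
`x⊖(x⊖y) = y⊖(y⊖x)` and `(x⊖y)⊖z = (x⊖z)⊖y`. -/
theorem stmt2 {α : Type*} (sub : α → α → α) (zero : α) :
    ((∀ x y z, sub (sub (sub x y) (sub x z)) (sub z y) = zero) ∧
     (∀ x, sub x zero = x) ∧
     (∀ x, sub zero x = zero) ∧
     (∀ x y, sub x y = zero → sub y x = zero → x = y) ∧
     (∀ x y, sub x (sub x y) = sub y (sub y x))) ↔
    ((∀ x, sub x zero = x) ∧
     (∀ x, sub zero x = zero) ∧
     (∀ x y, sub x (sub x y) = sub y (sub y x)) ∧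
     (∀ x y z, sub (sub x y) z = sub (sub x z) y)) := by
  constructor
  · rintro ⟨B, h0, hz, antisym, comm⟩
    refine ⟨h0, hz, comm, ?_⟩
    have lem1 : ∀ x y, sub (sub x y) x = zero := by
      intro x y
      have := B x y zero
      rwa [h0, hz, h0] at this
    have trans : ∀ a b c, sub a b = zero → sub b c = zero → sub a c = zero := by
      intro a b c hab hbc
      have := B a c b
      rwa [hab, hbc, h0, h0] at this
    have le3 : ∀ x y, sub (sub x (sub x y)) y = zero := by
      intro x y
      rw [comm]
      exact lem1 y (sub y x)
    have antit : ∀ x a b, sub a b = zero → sub (sub x b) (sub x a) = zero := by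
      intro x a b hab
      have := B x b a
      rwa [hab, h0] at this
    have exchange_le : ∀ x y z, sub (sub (sub x z) y) (sub (sub x y) z) = zero := by
      intro x y z
      have h1 := B x z (sub x y)
      have h2 := antit (sub x z) (sub x (sub x y)) y (le3 x y)
      exact trans _ _ _ h2 h1
    intro x y z
    exact antisym _ _ (exchange_le x z y) (exchange_le x y z)
  · rintro ⟨h0, hz, comm, ex⟩
    have xx : ∀ x, sub x x = zero := by
      intro x
      have := comm x zero
      rwa [h0, hz] at this
    have lem1 : ∀ x y, sub (sub x y) x = zero := by
      intro x y
      rw [ex x y x, xx, hz]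
    have le3 : ∀ x y, sub (sub x (sub x y)) y = zero := by
      intro x y
      rw [comm x y]
      exact lem1 y (sub y x)
    have eq_of_le : ∀ a b, sub a b = zero → a = sub b (sub b a) := by
      intro a b hab
      have := comm a b
      rwa [hab, h0] at this
    have mono : ∀ a b z, sub a b = zero → sub (sub a z) (sub b z) = zero := by
      intro a b z hab
      have ha := eq_of_le a b hab
      calc sub (sub a z) (sub b z)
          = sub (sub (sub b (sub b a)) z) (sub b z) := by rw [← ha]
        _ = sub (sub (sub b z) (sub b a)) (sub b z) := by rw [ex b (sub b a) z]
        _ = sub (sub (sub b z) (sub b z)) (sub b a) := ex _ _ _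
        _ = zero := by rw [xx, hz]
    refine ⟨?_, h0, hz, ?_, comm⟩
    · intro x y z
      have h := mono (sub x (sub x z)) z y (le3 x z)
      rwa [ex x (sub x z) y] at h
    · intro x y hxy hyx
      have := comm x y
      rwa [hxy, hyx, h0, h0] at this
end

section
/- Every commutative BCK-algebra whose underlying order is a finite chain with n+1 elements is isomorphic to S_n, where S_n = ({0,…,n}, ⊖, 0) with x ⊖ y = max{0, x−y}. -/
structure CBCK (α : Type*) where
  sub : α → α → α
  zero : α
  sub_zero : ∀ x, sub x zero = x
  zero_sub : ∀ x, sub zero x = zero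
  comm : ∀ x y, sub x (sub x y) = sub y (sub y x)
  exch : ∀ x y z, sub (sub x y) z = sub (sub x z) y

namespace CBCK

variable {α : Type*}

/-- The induced order: `x ≤ y` iff `x ⊖ y = 0`. -/
def le (A : CBCK α) (x y : α) : Prop := A.sub x y = A.zero

def lt (A : CBCK α) (x y : α) : Prop := A.le x y ∧ x ≠ y

/-- The meet `x ∧ y = x ⊖ (x ⊖ y)`. -/
def meet (A : CBCK α) (x y : α) : α := A.sub x (A.sub x y)

/-- An atom: a minimal nonzero element. -/
def atom (A : CBCK α) (e : α) : Prop := e ≠ A.zero ∧ ∀ x, A.lt x e → x = A.zero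

/-- A maximal element. -/
def maximal (A : CBCK α) (m : α) : Prop := ∀ x, A.le m x → x = m

/-- A branching element: `b` with `c, d > b` and `c ∧ d = b`. -/
def branching (A : CBCK α) (b : α) : Prop :=
  ∃ c d, A.lt b c ∧ A.lt b d ∧ A.meet c d = b

/-- The rooted-tree condition: every interval `[0, a]` is a chain. -/
def chainIntervals (A : CBCK α) : Prop :=
  ∀ a x y, A.le x a → A.le y a → A.le x y ∨ A.le y x

/-- The height of an element: `h(a) = |[0,a]| - 1`. -/
noncomputable def height (A : CBCK α) (a : α) : ℕ :=
  ({x | A.le x a} : Set α).ncard - 1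

/-- Iterated subtraction: `x ⊖ 0·y = x`, `x ⊖ (k+1)·y = (x ⊖ k·y) ⊖ y`. -/
def isub (A : CBCK α) (x : α) : ℕ → α → α
  | 0, _ => x
  | k + 1, y => A.sub (A.isub x k y) y

/-- A subalgebra universe: contains `0` and is closed under `⊖`. -/
def IsSub (A : CBCK α) (B : Set α) : Prop :=
  A.zero ∈ B ∧ ∀ x ∈ B, ∀ y ∈ B, A.sub x y ∈ B

/-- The subalgebra generated by `S`: the least `⊖`-closed subset containing `S ∪ {0}`. -/
def gen (A : CBCK α) (S : Set α) : Set α :=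
  ⋂₀ {B : Set α | A.IsSub B ∧ S ⊆ B}

end CBCK

namespace CBCK

variable {α : Type*} (A : CBCK α)


lemma sub_self'' (x : α) : A.sub x x = A.zero := by
  have h := A.comm x A.zero
  rwa [A.sub_zero, A.zero_sub] at h

lemma le_refl' (x : α) : A.le x x := A.sub_self'' x

lemma le_antisymm' {x y : α} (h1 : A.le x y) (h2 : A.le y x) : x = y := by
  have h := A.comm x y
  rwa [show A.sub x y = A.zero from h1, show A.sub y x = A.zero from h2,
      A.sub_zero, A.sub_zero] at h

lemma le_trans'' {x y z : α} (h1 : A.le x y) (h2 : A.le y z) : A.le x z := by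
  have hx : A.sub y (A.sub y x) = x := by
    have h := A.comm x y
    rw [show A.sub x y = A.zero from h1, A.sub_zero] at h
    exact h.symm
  show A.sub x z = A.zero
  calc A.sub x z = A.sub (A.sub y (A.sub y x)) z := by rw [hx]
    _ = A.sub (A.sub y z) (A.sub y x) := A.exch _ _ _
    _ = A.zero := by rw [show A.sub y z = A.zero from h2, A.zero_sub]

lemma sub_le' (x y : α) : A.le (A.sub x y) x := by
  show A.sub (A.sub x y) x = A.zero
  rw [A.exch, A.sub_self'', A.zero_sub]

lemma meet_eq' {x y : α} (h : A.le y x) : A.sub x (A.sub x y) = y := by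
  have h2 := A.comm x y
  rwa [show A.sub y x = A.zero from h, A.sub_zero] at h2

lemma lemL {x z : α} (h : A.le z x) (v : α) :
    A.sub (A.sub x v) (A.sub x z) = A.sub z v := by
  rw [A.exch, A.meet_eq' h]

lemma lemS {x z w : α} (hz : A.le z x) (hw : A.le w x) :
    A.sub z (A.sub x w) = A.sub w (A.sub x z) := by
  conv_lhs => rw [← A.meet_eq' hz]
  rw [A.exch, A.meet_eq' hw]

lemma claimC {x y e : α} (hey : A.le e y) (hyx : A.le y x) :
    A.sub (A.sub x e) (A.sub y e) = A.sub x y := by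
  have hux : A.le (A.sub x y) x := A.sub_le' x y
  have hex : A.le e x := A.le_trans'' hey hyx
  have h1 : A.sub (A.sub x e) (A.sub x y) = A.sub y e := A.lemL hyx e
  have h2 : A.le (A.sub x y) (A.sub x e) := by
    show A.sub (A.sub x y) (A.sub x e) = A.zero
    rw [A.lemS hux hex, A.meet_eq' hyx]
    exact hey
  calc A.sub (A.sub x e) (A.sub y e)
      = A.sub (A.sub x e) (A.sub (A.sub x e) (A.sub x y)) := by rw [h1]
    _ = A.sub (A.sub x y) (A.sub (A.sub x y) (A.sub x e)) := A.comm _ _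
    _ = A.sub (A.sub x y) A.zero := by
        rw [show A.sub (A.sub x y) (A.sub x e) = A.zero from h2]
    _ = A.sub x y := A.sub_zero _

end CBCK


/-- Truncated subtraction on `{0, …, n}`: the operation of the chain `S_n`. -/
def SnSub (n : ℕ) (x y : Fin (n + 1)) : Fin (n + 1) :=
  ⟨x.1 - y.1, Nat.lt_of_le_of_lt (Nat.sub_le _ _) x.isLt⟩

/-- Every cBCK-algebra whose order is a finite chain with `n+1` elements is
isomorphic to `S_n`. -/
theorem stmt4 {α : Type*} [Fintype α] (A : CBCK α) (n : ℕ)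
    (hcard : Fintype.card α = n + 1)
    (hchain : ∀ x y : α, A.le x y ∨ A.le y x) :
    ∃ f : α ≃ Fin (n + 1), f A.zero = 0 ∧
      ∀ x y, f (A.sub x y) = SnSub n (f x) (f y) := by
  classical
  letI : LinearOrder α :=
    { le := A.le
      le_refl := A.le_refl'
      le_trans := fun _ _ _ => A.le_trans''
      le_antisymm := fun _ _ => A.le_antisymm'
      le_total := hchain
      toDecidableLE := fun _ _ => Classical.dec _ }
  let g : Fin (n + 1) ≃o α := monoEquivOfFin α hcard
  have hmono : ∀ x y : α, A.le x y ↔ (g.symm x).val ≤ (g.symm y).val := by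
    intro x y
    rw [← Fin.le_def, g.symm.le_iff_le]
    exact Iff.rfl
  have hinj : ∀ x y : α, (g.symm x).val = (g.symm y).val → x = y := by
    intro x y h
    exact g.symm.injective (Fin.ext h)
  have hzero : ∀ x, A.le A.zero x := fun x => A.zero_sub x
  have hidxzero : (g.symm A.zero).val = 0 :=
    Nat.le_zero.mp (by
      have := (hmono A.zero (g 0)).mp (hzero (g 0))
      simpa using this)
  have hidx0 : ∀ x : α, (g.symm x).val = 0 → x = A.zero := fun x h =>
    hinj x A.zero (by rw [h, hidxzero])
  have hmain : ∀ j : ℕ, ∀ x y : α, (g.symm y).val = j →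
      (g.symm (A.sub x y)).val = (g.symm x).val - j := by
    intro j
    induction j with
    | zero =>
      intro x y hy
      rw [hidx0 y hy, A.sub_zero]
      omega
    | succ j ih =>
      intro x y hy
      rcases hchain x y with hxy | hyx
      · rw [show A.sub x y = A.zero from hxy, hidxzero]
        have := (hmono x y).mp hxy
        omega
      · have hyn : (g.symm y).val ≤ n := Nat.lt_succ_iff.mp (g.symm y).isLt
        have hyne : y ≠ A.zero := by
          intro h
          rw [h, hidxzero] at hy
          omega
        set e : α := g ⟨1, by omega⟩ with he
        have hidxe : (g.symm e).val = 1 := by simp [he]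
        have hemin : ∀ z : α, z ≠ A.zero → A.le e z := by
          intro z hz
          refine (hmono e z).mpr ?_
          have : (g.symm z).val ≠ 0 := fun h => hz (hidx0 z h)
          omega
        have hpred : ∀ x : α, x ≠ A.zero →
            (g.symm (A.sub x e)).val = (g.symm x).val - 1 := by
          intro x hx
          have hex : A.le e x := hemin x hx
          have hmeet : A.sub x (A.sub x e) = e := A.meet_eq' hex
          have hle : A.le (A.sub x e) x := A.sub_le' x e
          have hne : A.sub x e ≠ x := by
            intro h
            rw [h, A.sub_self''] at hmeet
            exact (by
              have : (g.symm e).val = 0 := by rw [← hmeet, hidxzero]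
              omega)
          have hstrict : (g.symm (A.sub x e)).val < (g.symm x).val :=
            lt_of_le_of_ne ((hmono _ _).mp hle) (fun h => hne (hinj _ _ h))
          have hx1 : 1 ≤ (g.symm x).val := by
            have : (g.symm x).val ≠ 0 := fun h => hx (hidx0 x h)
            omega
          have hxlt : (g.symm x).val - 1 < n + 1 := by omega
          set w : α := g ⟨(g.symm x).val - 1, hxlt⟩ with hw
          have hwidx : (g.symm w).val = (g.symm x).val - 1 := by simp [hw]
          have hwx : A.le w x := (hmono w x).mpr (by omega)
          have hwne : w ≠ x := by
            intro h
            rw [h] at hwidx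
            omega
          have key : A.le w (A.sub x e) := by
            show A.sub w (A.sub x e) = A.zero
            rw [A.lemS hwx hex]
            have hne2 : A.sub x w ≠ A.zero := fun h =>
              hwne (A.le_antisymm' h hwx).symm
            exact hemin _ hne2
          have := (hmono _ _).mp key
          omega
        have hey : A.le e y := hemin y hyne
        have hxne : x ≠ A.zero := by
          intro h
          exact hyne (A.le_antisymm' (h ▸ hyx) (hzero y))
        have hC : A.sub (A.sub x e) (A.sub y e) = A.sub x y := A.claimC hey hyx
        have hy' : (g.symm (A.sub y e)).val = j := by
          rw [hpred y hyne]
          omega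
        have ih' := ih (A.sub x e) (A.sub y e) hy'
        rw [hC] at ih'
        rw [ih', hpred x hxne]
        omega
  refine ⟨g.symm.toEquiv, ?_, ?_⟩
  · exact Fin.ext hidxzero
  · intro x y
    exact Fin.ext (hmain (g.symm y).val x y rfl)
end

section
/- Let A be a finite commutative BCK-algebra whose order is a rooted tree with root 0 (every interval [0,a] is a chain) with a single atom. Then A is generated as an algebra by the set m(A) ∪ {a}, where m(A) is the set of maximal elements of A and a is the atom. -/
namespace CBCK2
open CBCK
variable {α : Type*} (A : CBCK α)

theorem sub_self' (x : α) : A.sub x x = A.zero := by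
  have h := A.comm x A.zero
  rw [A.sub_zero, A.zero_sub] at h
  exact h

theorem le_refl' (x : α) : A.le x x := sub_self' A x

theorem zero_le' (x : α) : A.le A.zero x := A.zero_sub x

theorem sub_le' (x y : α) : A.le (A.sub x y) x := by
  show A.sub (A.sub x y) x = A.zero
  rw [A.exch, sub_self' A, A.zero_sub]

theorem le_antisymm' {x y : α} (h1 : A.le x y) (h2 : A.le y x) : x = y := by
  have := A.comm x y
  rw [h1, h2, A.sub_zero, A.sub_zero] at this
  exact this

theorem eq_sub_of_le {x y : α} (h : A.le x y) : x = A.sub y (A.sub y x) := by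
  have := A.comm x y
  rw [h, A.sub_zero] at this
  exact this

theorem le_trans' {x y z : α} (h1 : A.le x y) (h2 : A.le y z) : A.le x z := by
  show A.sub x z = A.zero
  rw [eq_sub_of_le A h1, A.exch, h2, A.zero_sub]

theorem sub_le_sub_left {x y z : α} (h : A.le y z) : A.le (A.sub x z) (A.sub x y) := by
  show A.sub (A.sub x z) (A.sub x y) = A.zero
  rw [A.exch]
  have h1 : A.le (A.sub x (A.sub x y)) y := by
    rw [A.comm]; exact sub_le' A _ _
  exact le_trans' A h1 h

/-- existence of minimal elements -/
theorem exists_min [Fintype α] (S : Set α) (hS : S.Nonempty) :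
    ∃ z ∈ S, ∀ w ∈ S, ¬ A.lt w z := by
  letI : PartialOrder α :=
    { le := A.le
      lt := A.lt
      le_refl := le_refl' A
      le_trans := fun a b c => le_trans' A
      le_antisymm := fun a b => le_antisymm' A
      lt_iff_le_not_ge := by
        intro a b
        constructor
        · rintro ⟨h1, h2⟩
          exact ⟨h1, fun hba => h2 (le_antisymm' A h1 hba)⟩
        · rintro ⟨h1, h2⟩
          exact ⟨h1, fun hab => h2 (hab ▸ le_refl' A a)⟩ }
  obtain ⟨z, hz, hmin⟩ := (Finite.to_wellFoundedLT (α := α)).wf.has_min S hS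
  exact ⟨z, hz, hmin⟩

/-- existence of maximal elements -/
theorem exists_max [Fintype α] (S : Set α) (hS : S.Nonempty) :
    ∃ z ∈ S, ∀ w ∈ S, ¬ A.lt z w := by
  letI : PartialOrder α :=
    { le := A.le
      lt := A.lt
      le_refl := le_refl' A
      le_trans := fun a b c => le_trans' A
      le_antisymm := fun a b => le_antisymm' A
      lt_iff_le_not_ge := by
        intro a b
        constructor
        · rintro ⟨h1, h2⟩
          exact ⟨h1, fun hba => h2 (le_antisymm' A h1 hba)⟩
        · rintro ⟨h1, h2⟩
          exact ⟨h1, fun hab => h2 (hab ▸ le_refl' A a)⟩ }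
  obtain ⟨z, hz, hmax⟩ := (Finite.to_wellFoundedGT (α := α)).wf.has_min S hS
  exact ⟨z, hz, fun w hw h => hmax w hw h⟩

end CBCK2

section Main
variable {α : Type*} [Fintype α] (A : CBCK α) {e : α}
open CBCK2

/-- the unique atom lies below every nonzero element -/
theorem atom_le (he : A.atom e) (huniq : ∀ x, A.atom x → x = e)
    {x : α} (hx : x ≠ A.zero) : A.le e x := by
  obtain ⟨z, ⟨hzx, hz0⟩, hmin⟩ :=
    exists_min A {y | A.le y x ∧ y ≠ A.zero} ⟨x, le_refl' A x, hx⟩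
  have hz : A.atom z := by
    refine ⟨hz0, fun w hw => ?_⟩
    by_contra hw0
    exact hmin w ⟨le_trans' A hw.1 hzx, hw0⟩ hw
  rw [← huniq z hz]
  exact hzx

theorem sub_e_lt (he : A.atom e) (huniq : ∀ x, A.atom x → x = e)
    {x : α} (hx : x ≠ A.zero) : A.lt (A.sub x e) x := by
  refine ⟨sub_le' A x e, fun hEq => ?_⟩
  have h1 : A.sub x (A.sub x e) = A.zero := by rw [hEq]; exact sub_self' A x
  have h2 : A.sub x (A.sub x e) = e := by
    rw [A.comm]
    rw [atom_le A he huniq hx, A.sub_zero]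
  exact he.1 (h2 ▸ h1)

/-- cover property: nothing strictly between `x ⊖ e` and `x` -/
theorem cover (he : A.atom e) (huniq : ∀ x, A.atom x → x = e)
    {x w : α} (h1 : A.lt (A.sub x e) w) (h2 : A.lt w x) : False := by
  have hxw : A.sub x w ≠ A.zero := fun h => h2.2 (le_antisymm' A h2.1 h)
  have hexw : A.le e (A.sub x w) := atom_le A he huniq hxw
  have h3 : A.le (A.sub x (A.sub x w)) (A.sub x e) := sub_le_sub_left A hexw
  have h4 : A.sub x (A.sub x w) = w := by
    rw [A.comm, h2.1, A.sub_zero]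
  rw [h4] at h3
  exact h1.2 (le_antisymm' A h1.1 h3)

/-- descent along a chain -/
theorem reach (hchain : A.chainIntervals) (he : A.atom e)
    (huniq : ∀ x, A.atom x → x = e) (m : α) :
    ∀ x, A.le x m → ∃ k, A.isub m k e = x := by
  intro x hx
  generalize hn : ({y | A.le y m ∧ A.le x y} : Set α).ncard = n
  induction n using Nat.strong_induction_on generalizing x with
  | _ n ih =>
    by_cases hxm : x = m
    · exact ⟨0, hxm.symm⟩
    · obtain ⟨z, ⟨hzm, hxz, hzx⟩, hmin⟩ :=
        exists_min A {y | A.le y m ∧ A.le x y ∧ y ≠ x}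
          ⟨m, le_refl' A m, hx, fun h => hxm h.symm⟩
      have hz0 : z ≠ A.zero := by
        intro h
        exact hzx (le_antisymm' A (h ▸ zero_le' A x : A.le z x) hxz)
      have hlt : A.lt (A.sub z e) z := sub_e_lt A he huniq hz0
      -- x ≤ z ⊖ e
      have hxz' : A.le x (A.sub z e) := by
        rcases hchain m x (A.sub z e) hx (le_trans' A (sub_le' A z e) hzm) with h | h
        · exact h
        · by_cases hEq : A.sub z e = x
          · exact hEq ▸ le_refl' A x
          · exact absurd (cover A he huniq ⟨h, hEq⟩ ⟨hxz, fun h' => hzx h'.symm⟩) not_false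
      have hzex : A.sub z e = x := by
        by_contra hne
        exact hmin (A.sub z e) ⟨le_trans' A (sub_le' A z e) hzm, hxz', hne⟩ hlt
      have hss : ({y | A.le y m ∧ A.le z y} : Set α) ⊂ {y | A.le y m ∧ A.le x y} := by
        constructor
        · rintro y ⟨h1, h2⟩
          exact ⟨h1, le_trans' A hxz h2⟩
        · intro hsub
          have := hsub ⟨hx, le_refl' A x⟩
          exact hzx (le_antisymm' A this.2 hxz)
      have hlt' : ({y | A.le y m ∧ A.le z y} : Set α).ncard < n := by
        rw [← hn]
        exact Set.ncard_lt_ncard hss (Set.toFinite _)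
      obtain ⟨k, hk⟩ := ih _ hlt' z hzm rfl
      exact ⟨k + 1, by rw [CBCK.isub, hk, hzex]⟩

end Main

/-- A finite single-atom rooted-tree cBCK-algebra is generated by
`m(A)` is the set of maximal elements and `a` is the atom. -/
theorem stmt6' {α : Type*} [Fintype α] (A : CBCK α)
    (hchain : A.chainIntervals)
    (e : α) (he : A.atom e) (huniq : ∀ x, A.atom x → x = e) :
    A.gen ({m | A.maximal m} ∪ {e}) = Set.univ := by
  set S : Set α := {m | A.maximal m} ∪ {e} with hSdef
  have hsubG : ∀ B ∈ {B : Set α | A.IsSub B ∧ S ⊆ B}, A.gen S ⊆ B :=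
    fun B hB => Set.sInter_subset_of_mem hB
  have hmemG : ∀ x, (∀ B : Set α, A.IsSub B → S ⊆ B → x ∈ B) → x ∈ A.gen S := by
    intro x h
    rw [CBCK.gen, Set.mem_sInter]
    rintro B ⟨h1, h2⟩
    exact h B h1 h2
  have hS : S ⊆ A.gen S := fun s hs => hmemG s (fun B _ h2 => h2 hs)
  have hG : A.IsSub (A.gen S) := by
    constructor
    · exact hmemG _ (fun B h1 _ => h1.1)
    · intro x hx y hy
      refine hmemG _ (fun B h1 h2 => ?_)
      rw [CBCK.gen, Set.mem_sInter] at hx hy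
      exact h1.2 x (hx B ⟨h1, h2⟩) y (hy B ⟨h1, h2⟩)
  have heG : e ∈ A.gen S := hS (Or.inr rfl)
  have hisub : ∀ (k : ℕ) (b : α), b ∈ A.gen S → A.isub b k e ∈ A.gen S := by
    intro k
    induction k with
    | zero => intro b hb; exact hb
    | succ n ihn => intro b hb; exact hG.2 _ (ihn b hb) e heG
  apply Set.eq_univ_of_forall
  intro x
  -- find a maximal element above x
  obtain ⟨m, hxm, hmax⟩ := CBCK2.exists_max A {y | A.le x y} ⟨x, CBCK2.le_refl' A x⟩
  have hmmax : A.maximal m := by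
    intro w hw
    by_contra hne
    exact hmax w (CBCK2.le_trans' A hxm hw) ⟨hw, fun h => hne h.symm⟩
  obtain ⟨k, hk⟩ := reach A hchain he huniq m x hxm
  rw [← hk]
  exact hisub k m (hS (Or.inl hmmax))

/-- A finite single-atom rooted-tree cBCK-algebra is generated by
`m(A) ∪ {a}`, where `m(A)` is the set of maximal elements and `a` is the atom. -/
theorem stmt6 {α : Type*} [Fintype α] (A : CBCK α)
    (hchain : A.chainIntervals)
    (e : α) (he : A.atom e) (huniq : ∀ x, A.atom x → x = e) :
    A.gen ({m | A.maximal m} ∪ {e}) = Set.univ := by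
  exact stmt6' A hchain e he huniq
end

section
/- In the commutative BCK-chain S_n = ({0,…,n}, ⊖, 0) with x ⊖ y = max{0, x−y}, a subset B containing 0 and n is closed under ⊖ if and only if B = {x ∈ {0,…,n} : k divides x} for some divisor k of n. -/
/-- In the chain `S_n`, a subset containing `0` and `n` is closed under
truncated subtraction iff it is the set of multiples of some divisor `k` of `n`. -/
theorem stmt10 (n : ℕ) (B : Set (Fin (n + 1)))
    (h0 : (0 : Fin (n + 1)) ∈ B) (hn : Fin.last n ∈ B) :
    (∀ x ∈ B, ∀ y ∈ B, SnSub n x y ∈ B) ↔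
      ∃ k, k ∣ n ∧ B = {x : Fin (n + 1) | k ∣ x.1} := by
  classical
  constructor
  · intro hcl
    rcases Nat.eq_zero_or_pos n with hn0 | hnpos
    · subst hn0
      refine ⟨0, dvd_rfl, ?_⟩
      ext x
      have hx0 : x = 0 := Fin.ext (by omega)
      subst hx0
      simp [h0]
    · have hQ : ∃ m, 0 < m ∧ ∃ h : m < n + 1, (⟨m, h⟩ : Fin (n + 1)) ∈ B :=
        ⟨n, hnpos, Nat.lt_succ_self n, hn⟩
      set k := Nat.find hQ with hkdef
      obtain ⟨hkpos, hklt, hkB⟩ := Nat.find_spec hQ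
      -- every element of B has value divisible by k
      have hA : ∀ m : ℕ, ∀ x : Fin (n + 1), x ∈ B → x.1 = m → k ∣ x.1 := by
        intro m
        induction m using Nat.strong_induction_on with
        | _ m ih =>
          intro x hx hxm
          rcases Nat.eq_zero_or_pos x.1 with h0' | hpos'
          · simp [h0']
          · have hxB' : (⟨x.1, x.isLt⟩ : Fin (n + 1)) ∈ B := by
              rw [Fin.eta]; exact hx
            have hkle : k ≤ x.1 := Nat.find_le ⟨hpos', x.isLt, hxB'⟩
            have hsub := hcl x hx _ hkB
            have hdvd : k ∣ (SnSub n x ⟨k, hklt⟩).1 :=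
              ih (x.1 - k) (by omega) _ hsub (by simp [SnSub, hxm])
            have hval : (SnSub n x ⟨k, hklt⟩).1 = x.1 - k := rfl
            rw [hval] at hdvd
            have hx1 : x.1 = (x.1 - k) + k := by omega
            rw [hx1]
            exact Nat.dvd_add hdvd dvd_rfl
      have hkn : k ∣ n := hA n (Fin.last n) hn rfl
      -- descending multiples are in B
      have hC : ∀ j : ℕ, j * k ≤ n → ∀ h : n - j * k < n + 1,
          (⟨n - j * k, h⟩ : Fin (n + 1)) ∈ B := by
        intro j
        induction j with
        | zero =>
          intro _ h
          have : (⟨n - 0 * k, h⟩ : Fin (n + 1)) = Fin.last n := by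
            ext; simp
          rw [this]; exact hn
        | succ j ihj =>
          intro hle h
          have hle' : j * k ≤ n := by nlinarith
          have hprev := ihj hle' (by omega)
          have hsub := hcl _ hprev _ hkB
          have heq : SnSub n ⟨n - j * k, by omega⟩ ⟨k, hklt⟩ =
              (⟨n - (j + 1) * k, h⟩ : Fin (n + 1)) := by
            ext
            show (n - j * k) - k = n - (j + 1) * k
            have : (j + 1) * k = j * k + k := by ring
            omega
          rwa [heq] at hsub
      refine ⟨k, hkn, ?_⟩
      ext x
      simp only [Set.mem_setOf_eq]
      constructor
      · intro hx; exact hA x.1 x hx rfl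
      · intro hdvd
        have hxn : x.1 ≤ n := by omega
        have hdvd2 : k ∣ n - x.1 := Nat.dvd_sub hkn hdvd
        set j := (n - x.1) / k with hj
        have hjk : j * k = n - x.1 := Nat.div_mul_cancel hdvd2
        have hjle : j * k ≤ n := by omega
        have hmem := hC j hjle (by omega)
        have hxeq : x = (⟨n - j * k, by omega⟩ : Fin (n + 1)) := by
          ext; show x.1 = n - j * k; omega
        rw [hxeq]; exact hmem
  · rintro ⟨k, hk, rfl⟩
    intro x hx y hy
    exact Nat.dvd_sub hx hy
end

section
/- Every subalgebra of the commutative BCK-chain S_n (the set {0,…,n} with truncated subtraction) is of the form {x ∈ {0,…,m} : k divides x} for some m ≤ n and some divisor k of m (where the empty-type case B = {0} corresponds to m = 0). -/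
/-- Every subalgebra of the chain `S_n` is of the form
`{x ∈ {0,…,m} : k ∣ x}` for some `m ≤ n` and some divisor `k` of `m`. -/
theorem stmt11 (n : ℕ) (B : Set (Fin (n + 1)))
    (h0 : (0 : Fin (n + 1)) ∈ B)
    (hcl : ∀ x ∈ B, ∀ y ∈ B, SnSub n x y ∈ B) :
    ∃ m k : ℕ, m ≤ n ∧ k ∣ m ∧
      B = {x : Fin (n + 1) | x.1 ≤ m ∧ k ∣ x.1} := by
  by_cases hB : ∀ x ∈ B, x = 0
  · refine ⟨0, 0, Nat.zero_le _, dvd_refl 0, ?_⟩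
    ext x
    simp only [Set.mem_setOf_eq, Nat.le_zero, Nat.zero_dvd]
    constructor
    · intro hx; have := hB x hx; subst this; simp
    · rintro ⟨h1, -⟩; have : x = 0 := Fin.ext h1; rw [this]; exact h0
  · push_neg at hB
    obtain ⟨b, hbB, hb0⟩ := hB
    set S : Set ℕ := {v | ∃ x ∈ B, x.1 = v} with hS
    have hSne : S.Nonempty := ⟨b.1, b, hbB, rfl⟩
    have hSbdd : ∀ v ∈ S, v ≤ n := by rintro v ⟨x, hx, rfl⟩; exact Fin.is_le x
    set m := sSup S with hm
    have hmS : m ∈ S := Nat.sSup_mem hSne ⟨n, hSbdd⟩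
    have hmn : m ≤ n := hSbdd m hmS
    have hle : ∀ x ∈ B, x.1 ≤ m := fun x hx => le_csSup ⟨n, hSbdd⟩ ⟨x, hx, rfl⟩
    set D : Set ℕ := {v | 0 < v ∧ v ∈ S} with hD
    have hDne : D.Nonempty :=
      ⟨b.1, Nat.pos_of_ne_zero (fun h => hb0 (Fin.ext h)), b, hbB, rfl⟩
    set d := sInf D with hd
    have hdD : d ∈ D := Nat.sInf_mem hDne
    obtain ⟨hdpos, e, heB, hed⟩ := hdD
    have hstep : ∀ x ∈ B, ∃ y ∈ B, y.1 = x.1 - d := by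
      intro x hx
      exact ⟨SnSub n x e, hcl x hx e heB, by simp [SnSub, hed]⟩
    have hdvd : ∀ v, ∀ x ∈ B, x.1 = v → d ∣ v := by
      intro v
      induction v using Nat.strong_induction_on with
      | _ v ih =>
        intro x hx hxv
        rcases Nat.eq_zero_or_pos v with h | h
        · simp [h]
        · have hdv : d ≤ v := Nat.sInf_le ⟨h, x, hx, hxv⟩
          obtain ⟨y, hy, hyv⟩ := hstep x hx
          have hdd : d ∣ v - d := ih (v - d) (by omega) y hy (by omega)
          obtain ⟨c, hc⟩ := hdd
          have hv : v = d * c + d := by omega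
          exact ⟨c + 1, by rw [hv]; ring⟩
    obtain ⟨xm, hxm, hxmv⟩ := hmS
    have hdm : d ∣ m := hdvd m xm hxm hxmv
    refine ⟨m, d, hmn, hdm, ?_⟩
    have hdown : ∀ j, ∃ x ∈ B, x.1 = m - j * d := by
      intro j
      induction j with
      | zero => exact ⟨xm, hxm, by simpa using hxmv⟩
      | succ j ih =>
        obtain ⟨x, hx, hxv⟩ := ih
        obtain ⟨y, hy, hyv⟩ := hstep x hx
        exact ⟨y, hy, by rw [hyv, hxv, Nat.succ_mul, ← Nat.sub_sub]⟩
    ext x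
    simp only [Set.mem_setOf_eq]
    constructor
    · intro hx
      exact ⟨hle x hx, hdvd x.1 x hx rfl⟩
    · rintro ⟨hxm', hdx⟩
      have hdvdsub : d ∣ m - x.1 := Nat.dvd_sub hdm hdx
      obtain ⟨j, hj⟩ := hdvdsub
      obtain ⟨y, hy, hyv⟩ := hdown j
      have h2 : m - j * d = x.1 := by rw [Nat.mul_comm, ← hj, Nat.sub_sub_self hxm']
      have : y = x := Fin.ext (hyv.trans h2)
      rwa [this] at hy
end

section
/- A subdirectly irreducible commutative BCK-algebra A satisfies the identity x ⊖ (n+1)·y = x ⊖ n·y if and only if the height of A is at most n, where height is sup over a ∈ A of (|[0,a]| − 1). (It suffices to prove this for A a finite single-atom rooted-tree cBCK-algebra: the identity holds iff every chain [0,a] has at most n+1 elements.) -/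
section Lemmas

variable {α : Type*} (A : CBCK α)

lemma csub_self (x : α) : A.sub x x = A.zero := by
  have h := A.comm x A.zero
  rwa [A.sub_zero, A.zero_sub] at h

lemma cle_refl (x : α) : A.le x x := csub_self A x

lemma czero_le (x : α) : A.le A.zero x := A.zero_sub x

lemma cle_antisymm {x y : α} (h1 : A.le x y) (h2 : A.le y x) : x = y := by
  have h := A.comm x y
  have h1' : A.sub x y = A.zero := h1
  have h2' : A.sub y x = A.zero := h2
  rw [h1', h2', A.sub_zero, A.sub_zero] at h
  exact h

lemma ceq_of_le {x y : α} (h : A.le x y) : A.sub y (A.sub y x) = x := by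
  have h' : A.sub x y = A.zero := h
  have hc := A.comm y x
  rw [h', A.sub_zero] at hc
  exact hc

lemma cle_trans {x y z : α} (h1 : A.le x y) (h2 : A.le y z) : A.le x z := by
  have hx := ceq_of_le A h1
  have h2' : A.sub y z = A.zero := h2
  show A.sub x z = A.zero
  rw [← hx, A.exch, h2', A.zero_sub]

lemma csub_le (x y : α) : A.le (A.sub x y) x := by
  show A.sub (A.sub x y) x = A.zero
  rw [A.exch, csub_self, A.zero_sub]

lemma cmono_right {a b : α} (h : A.le a b) (x : α) :
    A.le (A.sub x b) (A.sub x a) := by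
  show A.sub (A.sub x b) (A.sub x a) = A.zero
  rw [A.exch, A.comm x a]
  exact cle_trans A (csub_le A a (A.sub a x)) h

section Structural

variable [Fintype α] {e : α} (he : A.atom e) (huniq : ∀ x, A.atom x → x = e)

include he huniq

lemma catom_le (x : α) (hx : x ≠ A.zero) : A.le e x := by
  classical
  set f : α → ℕ := fun z => (Finset.univ.filter (fun u => A.le u z)).card with hf
  set S : Finset α := Finset.univ.filter (fun z => A.le z x ∧ z ≠ A.zero) with hS
  have hxS : x ∈ S := by simp [hS, cle_refl, hx]
  obtain ⟨m, hmS, hmin⟩ := S.exists_min_image f ⟨x, hxS⟩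
  rw [hS] at hmS
  simp only [Finset.mem_filter, Finset.mem_univ, true_and] at hmS
  have hatom : A.atom m := by
    refine ⟨hmS.2, fun z hz => ?_⟩
    by_contra hz0
    have hzS : z ∈ S := by
      simp only [hS, Finset.mem_filter, Finset.mem_univ, true_and]
      exact ⟨cle_trans A hz.1 hmS.1, hz0⟩
    have hsub : (Finset.univ.filter (fun u => A.le u z)) ⊂
        (Finset.univ.filter (fun u => A.le u m)) := by
      rw [Finset.ssubset_def]
      constructor
      · intro u hu
        simp only [Finset.mem_filter, Finset.mem_univ, true_and] at hu ⊢
        exact cle_trans A hu hz.1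
      · intro hcon
        have hm2 : m ∈ Finset.univ.filter (fun u => A.le u z) :=
          hcon (by simp [cle_refl])
        simp only [Finset.mem_filter, Finset.mem_univ, true_and] at hm2
        exact hz.2 (cle_antisymm A hz.1 hm2)
    have hc := Finset.card_lt_card hsub
    have hc2 := hmin z hzS
    simp only [hf] at hc2
    omega
  have hme := huniq m hatom
  exact hme ▸ hmS.1

lemma csub_atom_lt {x : α} (hx : x ≠ A.zero) : A.lt (A.sub x e) x := by
  refine ⟨csub_le A x e, fun hEq => ?_⟩
  have hex : A.sub e x = A.zero := catom_le A he huniq x hx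
  have h1 := A.comm x e
  rw [hex, A.sub_zero] at h1
  rw [hEq, csub_self] at h1
  exact he.1 h1.symm

lemma clt_le_sub_atom {z x : α} (h : A.lt z x) : A.le z (A.sub x e) := by
  have hne : A.sub x z ≠ A.zero := fun h0 => h.2 (cle_antisymm A h.1 h0)
  have hex : A.le e (A.sub x z) := catom_le A he huniq _ hne
  have hm := cmono_right A hex x
  rwa [ceq_of_le A h.1] at hm

lemma cheight_succ {x : α} (hx : x ≠ A.zero) :
    A.height (A.sub x e) + 1 = A.height x := by
  have hset : {z | A.le z x} = insert x {z | A.le z (A.sub x e)} := by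
    ext z
    simp only [Set.mem_setOf_eq, Set.mem_insert_iff]
    constructor
    · intro hz
      by_cases hzx : z = x
      · exact Or.inl hzx
      · exact Or.inr (clt_le_sub_atom A he huniq ⟨hz, hzx⟩)
    · rintro (rfl | hz)
      · exact cle_refl A z
      · exact cle_trans A hz (csub_le A x e)
  have hnot : x ∉ {z | A.le z (A.sub x e)} := fun hmem =>
    (csub_atom_lt A he huniq hx).2 (cle_antisymm A (csub_le A x e) hmem)
  have hcard : ({z | A.le z x} : Set α).ncard
      = ({z | A.le z (A.sub x e)} : Set α).ncard + 1 := by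
    rw [hset, Set.ncard_insert_of_notMem hnot (Set.toFinite _)]
  have h1 : 0 < ({z | A.le z (A.sub x e)} : Set α).ncard :=
    (Set.ncard_pos (Set.toFinite _)).mpr ⟨A.zero, czero_le A _⟩
  simp only [CBCK.height]
  omega

end Structural

lemma cheight_zero : A.height A.zero = 0 := by
  have hset : {z | A.le z A.zero} = ({A.zero} : Set α) := by
    ext z
    simp only [Set.mem_setOf_eq, Set.mem_singleton_iff, CBCK.le, A.sub_zero]
  simp [CBCK.height, hset]

lemma cheight_lt [Fintype α] {z w : α} (h : A.lt z w) : A.height z < A.height w := by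
  have hsub : {u | A.le u z} ⊆ {u | A.le u w} := fun u hu => cle_trans A hu h.1
  have hw : w ∉ {u | A.le u z} := fun hm => h.2 (cle_antisymm A h.1 hm)
  have hss : {u | A.le u z} ⊂ {u | A.le u w} :=
    ssubset_of_subset_of_ne hsub (by
      intro heq
      exact hw (by rw [heq]; exact cle_refl A w))
  have hc := Set.ncard_lt_ncard hss (Set.toFinite _)
  have h1 : 0 < ({u | A.le u z} : Set α).ncard :=
    (Set.ncard_pos (Set.toFinite _)).mpr ⟨A.zero, czero_le A _⟩
  simp only [CBCK.height]
  omega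

end Lemmas

/-- A finite single-atom rooted-tree cBCK-algebra satisfies the identity
`x ⊖ (n+1)·y = x ⊖ n·y` iff its height is at most `n`. -/
theorem stmt14 {α : Type*} [Fintype α] (A : CBCK α)
    (hchain : A.chainIntervals)
    (e : α) (he : A.atom e) (huniq : ∀ x, A.atom x → x = e)
    (n : ℕ) :
    (∀ x y : α, A.isub x (n + 1) y = A.isub x n y) ↔
      ∀ a : α, A.height a ≤ n := by
  constructor
  · intro hid a
    by_contra hcon
    push_neg at hcon
    have key : ∀ k, k ≤ A.height a → A.height (A.isub a k e) = A.height a - k := by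
      intro k
      induction k with
      | zero => intro _; simp [CBCK.isub]
      | succ k ih =>
        intro hk
        have hk' : k ≤ A.height a := Nat.le_of_succ_le hk
        have ihk := ih hk'
        have hne : A.isub a k e ≠ A.zero := by
          intro h0
          rw [h0, cheight_zero A] at ihk
          omega
        have hstep := cheight_succ A he huniq hne
        show A.height (A.sub (A.isub a k e) e) = A.height a - (k + 1)
        omega
    have h1 := key (n + 1) hcon
    have h2 := key n (by omega)
    have hideq := hid a e
    rw [hideq] at h1
    omega
  · intro hh x y
    by_contra hne
    have prop : ∀ k, A.isub x (k + 1) y = A.isub x k y →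
        ∀ m, k ≤ m → A.isub x (m + 1) y = A.isub x m y := by
      intro k hk m hm
      induction m, hm using Nat.le_induction with
      | base => exact hk
      | succ m hm ih =>
        show A.sub (A.isub x (m + 1) y) y = A.isub x (m + 1) y
        exact congrArg (fun t => A.sub t y) ih
    have hstrict : ∀ k, k ≤ n → A.lt (A.isub x (k + 1) y) (A.isub x k y) := by
      intro k hk
      refine ⟨csub_le A _ _, fun heq => ?_⟩
      exact hne (prop k heq n hk)
    have bound : ∀ k, k ≤ n + 1 → A.height (A.isub x k y) + k ≤ A.height x := by
      intro k
      induction k with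
      | zero => intro _; simp [CBCK.isub]
      | succ k ih =>
        intro hk
        have h1 := ih (by omega)
        have h2 := cheight_lt A (hstrict k (by omega))
        omega
    have hb := bound (n + 1) le_rfl
    have hx := hh x
    omega
end
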